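/- arXiv:0806.3546 — 3 statements merged into one kernel-verified Lean document; each statement's English description precedes it below -/
import Mathlib

section
/- Let p(z,w) be a nonzero polynomial of degree m in z and degree n in w. Then the set of branched values C(p) = {w ∈ Ĉ : ∃z, p(z,w)=0 and e_p(z,w) ≥ 2} is finite, with cardinality at most 2(m−1)n, and hence the set of branched points B(p) = {z ∈ Ĉ : ∃w, p(z,w)=0 and e_p(z,w) ≥ 2} is finite with cardinality at most 2m(m−1)n. -/
open Polynomial

/-- Specialization of `p(z,w)` at `w = w₀`, as a polynomial in `z`. -/
noncomputable def spec (p : Polynomial (Polynomial ℂ)) (w : ℂ) : Polynomial ℂ :=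
  p.map (Polynomial.evalRingHom w)

/-!
Let `m = deg_z p`. At a branched value `w` some `z` is a common root of `∂_z p(·, w)` and of the
polar derivative `m p - z ∂_z p` at `w`, both of degree at most `m - 1` in `z`. Hence `w` is a
root of their resultant `R`, taken in size `(m - 1, m - 1)`: a `2(m - 1) × 2(m - 1)` determinant
whose entries have degree at most `n` in `w`, so `deg R ≤ 2(m - 1)n`. Moreover `R ≠ 0`: over the
fraction field `ℂ(w)` the polynomial `p` stays squarefree, hence separable, so `∂_z p` and the
polar derivative are coprime. Finally each branched value carries at most `m` branched points.
-/

namespace Polynomial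

section Resultant

variable {R : Type*} [CommRing R]

lemma resultant_eq_zero_of_isRoot {f g : R[X]} {m n : ℕ} (hf : f.natDegree ≤ m)
    (hg : g.natDegree ≤ n) (hmn : m ≠ 0 ∨ n ≠ 0) {z : R} (hfz : f.IsRoot z) (hgz : g.IsRoot z) :
    resultant f g m n = 0 := by
  obtain ⟨a, b, -, -, h⟩ := exists_mul_add_mul_eq_C_resultant f g hf hg hmn
  simpa [hfz.eq_zero, hgz.eq_zero] using (congrArg (eval z) h).symm

lemma resultant_natDegree_ne_zero [IsDomain R] {f g : R[X]} (hf : f ≠ 0) (hfg : IsCoprime f g)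
    {n : ℕ} (hg : g.natDegree ≤ n) : resultant f g f.natDegree n ≠ 0 := by
  obtain ⟨k, rfl⟩ := Nat.exists_eq_add_of_le hg
  rw [resultant_add_right_deg _ _ _ _ _ le_rfl]
  exact mul_ne_zero (pow_ne_zero _ (leadingCoeff_ne_zero.mpr hf)) (resultant_ne_zero f g hfg)

lemma natDegree_det_le {ι : Type*} [Fintype ι] [DecidableEq ι] {M : Matrix ι ι R[X]} {d : ℕ}
    (hM : ∀ i j, (M i j).natDegree ≤ d) : M.det.natDegree ≤ Fintype.card ι * d := by
  rw [Matrix.det_apply']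
  refine natDegree_sum_le_of_forall_le _ _ fun σ _ => natDegree_mul_le.trans ?_
  rw [natDegree_intCast, zero_add]
  refine (natDegree_prod_le _ _).trans ?_
  simpa using Finset.sum_le_card_nsmul Finset.univ _ d fun i _ => hM (σ i) i

lemma natDegree_resultant_le {f g : R[X][X]} {m n d : ℕ} (hf : ∀ i, (f.coeff i).natDegree ≤ d)
    (hg : ∀ i, (g.coeff i).natDegree ≤ d) : (resultant f g m n).natDegree ≤ (m + n) * d := by
  simpa [resultant] using natDegree_det_le (M := sylvester f g m n) fun i j => by
    induction j using Fin.addCases <;> simp only [sylvester, Matrix.of_apply, Fin.addCases_left,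
      Fin.addCases_right] <;> split_ifs <;> simp [hf, hg]

end Resultant

section PolarDerivative

variable {R : Type*} [CommRing R]

/-- With `P(z, t) = t ^ m * p(z / t)` the homogenization of `p`, this is `∂P/∂t` at `t = 1`
(Euler: `m P = z ∂_z P + t ∂_t P`). Its degree is below `m`, unlike that of `p`, which is what
keeps the resultant with `p'` of size `2(m - 1)` instead of `2m - 1`. -/
noncomputable def polarDerivative (p : R[X]) : R[X] := p.natDegree • p - X * derivative p

lemma coeff_polarDerivative (p : R[X]) (j : ℕ) :
    (polarDerivative p).coeff j = (p.natDegree - j : ℤ) • p.coeff j := by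
  rw [polarDerivative, coeff_sub, coeff_smul, sub_smul, natCast_zsmul, natCast_zsmul]
  cases j with
  | zero => simp
  | succ j => rw [coeff_X_mul, coeff_derivative, nsmul_eq_mul, mul_comm]; ring

lemma natDegree_polarDerivative_le (p : R[X]) :
    (polarDerivative p).natDegree ≤ p.natDegree - 1 := by
  rw [natDegree_le_iff_coeff_eq_zero]
  intro j hj
  rw [coeff_polarDerivative]
  rcases eq_or_lt_of_le (show p.natDegree ≤ j by omega) with rfl | hlt
  · simp
  · simp [coeff_eq_zero_of_natDegree_lt hlt]

lemma polarDerivative_map {S : Type*} [CommRing S] {φ : R →+* S} (hφ : Function.Injective φ)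
    (p : R[X]) : (polarDerivative p).map φ = polarDerivative (p.map φ) := by
  simp [polarDerivative, natDegree_map_eq_of_injective hφ, derivative_map]

lemma isRoot_polarDerivative_map {S : Type*} [CommRing S] (φ : R →+* S) {p : R[X]} {z : S}
    (hp : (p.map φ).IsRoot z) (hp' : (derivative (p.map φ)).IsRoot z) :
    ((polarDerivative p).map φ).IsRoot z := by
  simp_all [polarDerivative, ← derivative_map]

lemma isCoprime_derivative_polarDerivative {K : Type*} [Field K] [CharZero K] {p : K[X]}
    (hp : Squarefree p) (hp0 : p.natDegree ≠ 0) :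
    IsCoprime (derivative p) (polarDerivative p) := by
  have hsep : IsCoprime p (derivative p) := PerfectField.separable_iff_squarefree.mpr hp
  rw [polarDerivative, nsmul_eq_mul, ← C_eq_natCast, IsCoprime.sub_mul_right_right_iff,
    isCoprime_mul_unit_left_right (isUnit_C.mpr (by simpa using hp0))]
  exact hsep.symm

end PolarDerivative

section FractionField

variable {R K : Type*} [CommRing R] [IsDomain R] [NormalizedGCDMonoid R] [Field K] [Algebra R K]
  [IsFractionRing R K]

lemma exists_isPrimitive_map_associated {x : K[X]} (hx : x ≠ 0) :
    ∃ t : R[X], t.IsPrimitive ∧ Associated (t.map (algebraMap R K)) x := by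
  obtain ⟨b, hb, hbx⟩ := IsLocalization.integerNormalization_spec (nonZeroDivisors R) x
  set y := IsLocalization.integerNormalization (nonZeroDivisors R) x
  have hy : y ≠ 0 := by simpa [y, IsFractionRing.integerNormalization_eq_zero_iff] using hx
  have hunit : ∀ {r : R}, r ≠ 0 → IsUnit (C (algebraMap R K r)) := fun hr =>
    isUnit_C.mpr <| isUnit_iff_ne_zero.mpr <|
      (map_ne_zero_iff _ (IsFractionRing.injective R K)).mpr hr
  refine ⟨y.primPart, y.isPrimitive_primPart, ?_⟩
  have hyx : C (algebraMap R K y.content) * y.primPart.map (algebraMap R K) =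
      C (algebraMap R K b) * x := by
    rw [← map_C, ← Polynomial.map_mul, ← y.eq_C_content_mul_primPart, hbx, Algebra.smul_def,
      algebraMap_apply]
  have h1 := associated_unit_mul_left (y.primPart.map (algebraMap R K)) _
    (hunit (content_eq_zero_iff.not.mpr hy))
  have h2 := associated_unit_mul_left x _ (hunit (nonZeroDivisors.ne_zero hb))
  rw [hyx] at h1
  exact h1.symm.trans h2

lemma squarefree_map_fraction_map {p : R[X]} (hp : Squarefree p) :
    Squarefree (p.map (algebraMap R K)) := by
  intro x hx
  have hx0 : x ≠ 0 := by
    rintro rfl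
    exact hp.ne_zero
      ((Polynomial.map_eq_zero_iff (IsFractionRing.injective R K)).mp (by simpa using hx))
  obtain ⟨t, ht, htx⟩ := exists_isPrimitive_map_associated (R := R) hx0
  have htt : t * t ∣ p := (ht.mul ht).dvd_of_fraction_map_dvd_fraction_map (K := K)
    (by rw [Polynomial.map_mul]; exact (htx.mul_mul htx).dvd.trans hx)
  exact htx.isUnit_iff.mp ((hp t htt).map (mapRingHom (algebraMap R K) : R[X] →+* K[X]))

end FractionField

section Bivariate

variable {R : Type*} [CommRing R]

lemma eval_sum_monomial_coeff_coeff (p : R[X][X]) (z : R) (j : ℕ) :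
    (∑ i ∈ p.support, monomial i ((p.coeff i).coeff j)).eval z = (p.eval (C z)).coeff j := by
  rw [eval_finsetSum, eval_eq_sum, sum_def, finsetSum_coeff]
  simp only [eval_monomial, ← C_pow, coeff_mul_C]

lemma coeff_sum_monomial_coeff_coeff (p : R[X][X]) (i j : ℕ) :
    (∑ k ∈ p.support, monomial k ((p.coeff k).coeff j)).coeff i = (p.coeff i).coeff j := by
  simp only [finsetSum_coeff, coeff_monomial, Finset.sum_ite_eq']
  split_ifs with h
  · rfl
  · rw [notMem_support_iff.mp h, coeff_zero]

lemma natDegree_coeff_le_of_forall_natDegree_eval_C_le [IsDomain R] [Infinite R] {p : R[X][X]}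
    {n : ℕ} (hp : ∀ z : R, (p.eval (C z)).natDegree ≤ n) (i : ℕ) : (p.coeff i).natDegree ≤ n := by
  refine natDegree_le_iff_coeff_eq_zero.mpr fun j hj => ?_
  have hzero : ∑ k ∈ p.support, monomial k ((p.coeff k).coeff j) = 0 := funext fun z => by
    rw [eval_sum_monomial_coeff_coeff, eval_zero,
      coeff_eq_zero_of_natDegree_lt ((hp z).trans_lt hj)]
  rw [← coeff_sum_monomial_coeff_coeff, hzero, coeff_zero]

lemma natDegree_coeff_derivative_le {p : R[X][X]} {n : ℕ} (hp : ∀ i, (p.coeff i).natDegree ≤ n)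
    (i : ℕ) : ((derivative p).coeff i).natDegree ≤ n := by
  rw [coeff_derivative, ← Nat.cast_succ]
  exact natDegree_mul_le.trans (by rw [natDegree_natCast, add_zero]; exact hp _)

lemma natDegree_coeff_polarDerivative_le {p : R[X][X]} {n : ℕ}
    (hp : ∀ i, (p.coeff i).natDegree ≤ n) (i : ℕ) :
    ((polarDerivative p).coeff i).natDegree ≤ n := by
  rw [coeff_polarDerivative]
  exact (natDegree_smul_le _ _).trans (hp i)

noncomputable def branchResultant (p : R[X][X]) : R[X] :=
  resultant (derivative p) (polarDerivative p) (p.natDegree - 1) (p.natDegree - 1)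

lemma natDegree_branchResultant_le {p : R[X][X]} {n : ℕ} (hp : ∀ i, (p.coeff i).natDegree ≤ n) :
    (branchResultant p).natDegree ≤ 2 * (p.natDegree - 1) * n :=
  (natDegree_resultant_le (natDegree_coeff_derivative_le hp)
    (natDegree_coeff_polarDerivative_le hp)).trans_eq (by ring)

lemma branchResultant_ne_zero [IsDomain R] [NormalizedGCDMonoid R] [CharZero R] {p : R[X][X]}
    (hp : Squarefree p) (hm : 2 ≤ p.natDegree) : branchResultant p ≠ 0 := by
  set φ := algebraMap R[X] (FractionRing R[X])
  have hφ : Function.Injective φ := IsFractionRing.injective _ _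
  have hdeg : (p.map φ).natDegree = p.natDegree := natDegree_map_eq_of_injective hφ p
  have hder : (derivative (p.map φ)).natDegree = p.natDegree - 1 := by
    rw [natDegree_derivative, hdeg]
  have hres := resultant_natDegree_ne_zero
    (ne_zero_of_natDegree_gt (p := derivative (p.map φ)) (n := 0) (by omega))
    (isCoprime_derivative_polarDerivative (squarefree_map_fraction_map hp) (by omega))
    (natDegree_polarDerivative_le _)
  rw [hder, hdeg, derivative_map, ← polarDerivative_map hφ, resultant_map_map] at hres
  exact fun h => hres (by rw [← branchResultant, h, map_zero])

lemma eval_branchResultant_eq_zero {p : R[X][X]} (hm : 2 ≤ p.natDegree) {w z : R}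
    (hz : 1 < rootMultiplicity z (p.map (evalRingHom w))) : (branchResultant p).eval w = 0 := by
  have hne : p.map (evalRingHom w) ≠ 0 := by rintro h; simp [h] at hz
  obtain ⟨hroot, hroot'⟩ := (one_lt_rootMultiplicity_iff_isRoot hne).mp hz
  rw [← coe_evalRingHom, branchResultant, ← resultant_map_map]
  exact resultant_eq_zero_of_isRoot (natDegree_map_le.trans (natDegree_derivative_le p))
    (natDegree_map_le.trans (natDegree_polarDerivative_le p)) (.inl (by omega))
    (by rwa [derivative_map] at hroot') (isRoot_polarDerivative_map _ hroot hroot')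

end Bivariate

end Polynomial

section Counting

variable {R : Type*} [CommRing R] [IsDomain R]

lemma Set.finite_and_card_le_of_forall_isRoot {d : R[X]} (hd : d ≠ 0) {S : Set R}
    (hS : ∀ w ∈ S, d.IsRoot w) : S.Finite ∧ Nat.card S ≤ d.natDegree := by
  classical
  have hsub : S ⊆ d.roots.toFinset := fun w hw => by simpa [hd] using hS w hw
  refine ⟨d.roots.toFinset.finite_toSet.subset hsub, ?_⟩
  calc Nat.card S = S.ncard := Nat.card_coe_set_eq S
    _ ≤ d.roots.toFinset.card := by
      simpa using Set.ncard_le_ncard hsub d.roots.toFinset.finite_toSet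
    _ ≤ d.natDegree := (Multiset.toFinset_card_le _).trans (card_roots' d)

lemma Set.finite_and_card_le_of_forall_exists_isRoot {T S : Set R} (hT : T.Finite)
    {f : R → R[X]} {m : ℕ} (hf : ∀ w, (f w).natDegree ≤ m)
    (hS : ∀ z ∈ S, ∃ w ∈ T, f w ≠ 0 ∧ (f w).IsRoot z) : S.Finite ∧ Nat.card S ≤ Nat.card T * m := by
  classical
  set U := hT.toFinset.biUnion fun w => (f w).roots.toFinset
  have hsub : S ⊆ U := fun z hz => by
    obtain ⟨w, hw, hfw, hz⟩ := hS z hz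
    exact Finset.mem_biUnion.mpr
      ⟨w, hT.mem_toFinset.mpr hw, Multiset.mem_toFinset.mpr ((mem_roots hfw).mpr hz)⟩
  refine ⟨U.finite_toSet.subset hsub, ?_⟩
  calc Nat.card S = S.ncard := Nat.card_coe_set_eq S
    _ ≤ U.card := by simpa using Set.ncard_le_ncard hsub U.finite_toSet
    _ ≤ ∑ w ∈ hT.toFinset, (f w).roots.toFinset.card := Finset.card_biUnion_le
    _ ≤ hT.toFinset.card * m := Finset.sum_le_card_nsmul _ _ _ fun w _ =>
      (Multiset.toFinset_card_le _).trans ((card_roots' _).trans (hf w))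
    _ = Nat.card T * m := by rw [← Set.ncard_eq_toFinset_card T hT, Nat.card_coe_set_eq]

end Counting

section BranchedSets

def branchedValues (p : ℂ[X][X]) : Set ℂ :=
  {w | ∃ z : ℂ, (spec p w).eval z = 0 ∧ 2 ≤ rootMultiplicity z (spec p w)}

def branchedPoints (p : ℂ[X][X]) : Set ℂ :=
  {z | ∃ w : ℂ, (spec p w).eval z = 0 ∧ 2 ≤ rootMultiplicity z (spec p w)}

lemma branchedValues_eq_empty {p : ℂ[X][X]} (hm : p.natDegree < 2) : branchedValues p = ∅ := by
  refine Set.eq_empty_of_forall_notMem fun w ⟨z, _, hz⟩ => ?_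
  have := (count_roots (p := spec p w) (a := z)).symm ▸ (Multiset.count_le_card _ _).trans
    ((card_roots' _).trans (natDegree_map_le (p := p)))
  omega

lemma branchedValues_finite_and_card_le {p : ℂ[X][X]} (hp : Squarefree p) {n : ℕ}
    (hn : ∀ z : ℂ, (p.eval (C z)).natDegree ≤ n) :
    (branchedValues p).Finite ∧ Nat.card (branchedValues p) ≤ 2 * (p.natDegree - 1) * n := by
  obtain hm | hm := lt_or_ge p.natDegree 2
  · simp [branchedValues_eq_empty hm]
  have hroots : ∀ w ∈ branchedValues p, (branchResultant p).IsRoot w :=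
    fun w ⟨z, _, hz⟩ => eval_branchResultant_eq_zero hm hz
  obtain ⟨hfin, hcard⟩ := Set.finite_and_card_le_of_forall_isRoot (branchResultant_ne_zero hp hm)
    hroots
  exact ⟨hfin, hcard.trans
    (natDegree_branchResultant_le (natDegree_coeff_le_of_forall_natDegree_eval_C_le hn))⟩

lemma branchedPoints_finite_and_card_le {p : ℂ[X][X]} (hC : (branchedValues p).Finite) :
    (branchedPoints p).Finite ∧ Nat.card (branchedPoints p) ≤
      Nat.card (branchedValues p) * p.natDegree :=
  Set.finite_and_card_le_of_forall_exists_isRoot (f := spec p) hC (fun _ => natDegree_map_le)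
    fun z ⟨w, hz, hmult⟩ => ⟨w, ⟨z, hz, hmult⟩, fun h => by simp [h] at hmult, hz⟩

end BranchedSets

theorem stmt_3_general (p : Polynomial (Polynomial ℂ)) (hred : Squarefree p)
    (m n : ℕ) (hm : p.natDegree = m)
    (hn : ∀ z : ℂ, (p.eval (Polynomial.C z)).natDegree ≤ n) :
    {w : ℂ | ∃ z : ℂ, (spec p w).eval z = 0 ∧
        2 ≤ Polynomial.rootMultiplicity z (spec p w)}.Finite ∧
    Nat.card {w : ℂ | ∃ z : ℂ, (spec p w).eval z = 0 ∧
        2 ≤ Polynomial.rootMultiplicity z (spec p w)} ≤ 2 * (m - 1) * n ∧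
    {z : ℂ | ∃ w : ℂ, (spec p w).eval z = 0 ∧
        2 ≤ Polynomial.rootMultiplicity z (spec p w)}.Finite ∧
    Nat.card {z : ℂ | ∃ w : ℂ, (spec p w).eval z = 0 ∧
        2 ≤ Polynomial.rootMultiplicity z (spec p w)} ≤ 2 * m * (m - 1) * n := by
  subst hm
  obtain ⟨hCfin, hCcard⟩ := branchedValues_finite_and_card_le hred hn
  obtain ⟨hBfin, hBcard⟩ := branchedPoints_finite_and_card_le hCfin
  refine ⟨hCfin, hCcard, hBfin, hBcard.trans ?_⟩
  calc Nat.card (branchedValues p) * p.natDegree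
      ≤ 2 * (p.natDegree - 1) * n * p.natDegree := Nat.mul_le_mul_right _ hCcard
    _ = 2 * p.natDegree * (p.natDegree - 1) * n := by ring

/-- for a (reduced) nonzero polynomial `p` of degree `m` in `z` and
degree `n` in `w`, the set of branched values
`C(p) = {w : ∃ z, p(z,w) = 0 ∧ e_p(z,w) ≥ 2}` is finite with at most `2(m-1)n`
elements, and the set of branched points
`B(p) = {z : ∃ w, p(z,w) = 0 ∧ e_p(z,w) ≥ 2}` is finite with at most `2m(m-1)n`
elements.  The branch index `e_p(z,w)` is the root multiplicity of `z` in the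
specialization of `p` at `w`. -/
theorem stmt_3 (p : Polynomial (Polynomial ℂ)) (hp : p ≠ 0) (hred : Squarefree p)
    (m n : ℕ) (hm : p.natDegree = m)
    (hn : ∀ z : ℂ, (p.eval (Polynomial.C z)).natDegree ≤ n) :
    {w : ℂ | ∃ z : ℂ, (spec p w).eval z = 0 ∧
        2 ≤ Polynomial.rootMultiplicity z (spec p w)}.Finite ∧
    Nat.card {w : ℂ | ∃ z : ℂ, (spec p w).eval z = 0 ∧
        2 ≤ Polynomial.rootMultiplicity z (spec p w)} ≤ 2 * (m - 1) * n ∧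
    {z : ℂ | ∃ w : ℂ, (spec p w).eval z = 0 ∧
        2 ≤ Polynomial.rootMultiplicity z (spec p w)}.Finite ∧
    Nat.card {z : ℂ | ∃ w : ℂ, (spec p w).eval z = 0 ∧
        2 ≤ Polynomial.rootMultiplicity z (spec p w)} ≤ 2 * m * (m - 1) * n :=
  stmt_3_general p hred m n hm hn
end

section
/- Let p(z,w) = z^m − w^n with m, n ≥ 1 and J = 𝕋. Identifying 𝕋 with ℝ/ℤ via z = e^{2πiα}, w = e^{2πiβ}, and letting d = gcd(m,n), the pair ([α],[β]) lies in G_r (i.e., there is a chain z₁,…,z_{r+1} ∈ 𝕋 with z₁ = e^{2πiα}, z_{r+1} = e^{2πiβ}, and z_k^m = z_{k+1}^n for each k) if and only if there exists an integer k with β ≡ (m^r/n^r)α + d^{r−1}k/n^r (mod ℤ). -/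
/-!
Writing points of the circle as `e t = exp (2πit)`, the relation `z ^ m = w ^ n` becomes
`n b = m a + c` with `c ∈ ℤ`, and every chain on the circle lifts to a chain of angles with
prescribed endpoints. Composing `r` steps gives `n^r β = m^r α + c`, where the offsets `c` that
occur form the ideal `I_r` with `I_1 = ℤ` and `I_(r+1) = m I_r + n^r ℤ`; by Bezout
`m d^(r-1) ℤ + n^r ℤ = d^r ℤ`, so `I_r = d^(r-1) ℤ`.
-/

def IsChainT (m n r : ℕ) (z : Fin (r + 1) → ℂ) : Prop :=
  (∀ k, ‖z k‖ = 1) ∧ ∀ k : Fin r, z k.castSucc ^ m = z k.succ ^ n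

open Complex Real

section RelChain

variable {α β : Type*}

def RelChain (R : α → α → Prop) (r : ℕ) (a b : α) : Prop :=
  ∃ z : Fin (r + 1) → α,
    (∀ k : Fin r, R (z k.castSucc) (z k.succ)) ∧ z 0 = a ∧ z (Fin.last r) = b

variable {R : α → α → Prop} {r : ℕ}

theorem relChain_one_iff {a b : α} : RelChain R 1 a b ↔ R a b := by
  constructor
  · rintro ⟨z, hz, rfl, rfl⟩
    exact hz 0
  · intro h
    exact ⟨![a, b], fun k => by fin_cases k; exact h, rfl, rfl⟩

theorem relChain_succ_iff {a b : α} :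
    RelChain R (r + 1) a b ↔ ∃ c, RelChain R r a c ∧ R c b := by
  constructor
  · rintro ⟨z, hz, rfl, rfl⟩
    exact ⟨z (Fin.last r).castSucc, ⟨Fin.init z, fun k => hz k.castSucc, rfl, rfl⟩,
      hz (Fin.last r)⟩
  · rintro ⟨c, ⟨z, hz, rfl, rfl⟩, hc⟩
    refine ⟨Fin.snoc z b, fun k => ?_, ?_, Fin.snoc_last _ _⟩
    · induction k using Fin.lastCases with
      | last => simpa using hc
      | cast k => rw [Fin.succ_castSucc, Fin.snoc_castSucc, Fin.snoc_castSucc]; exact hz k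
    · simp

theorem relChain_comap_iff {S : β → β → Prop} {f : β → α}
    (hf : ∀ x y, R x y → x ∈ Set.range f) (hS : ∀ x y, S x y ↔ R (f x) (f y))
    (hr : 1 ≤ r) {a b : β} :
    RelChain S r a b ↔ RelChain R r (f a) (f b) := by
  induction r, hr using Nat.le_induction generalizing b with
  | base => simp only [relChain_one_iff, hS]
  | succ r _ ih =>
    simp only [relChain_succ_iff, hS]
    constructor
    · rintro ⟨c, hac, hcb⟩
      exact ⟨f c, ih.mp hac, hcb⟩
    · rintro ⟨_, hac, hcb⟩
      obtain ⟨c, rfl⟩ := hf _ _ hcb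
      exact ⟨c, ih.mpr hac, hcb⟩

end RelChain

theorem exists_isChainT_iff_relChain {m n r : ℕ} (hr : 1 ≤ r) (a b : ℂ) :
    (∃ z, IsChainT m n r z ∧ z 0 = a ∧ z (Fin.last r) = b) ↔
      RelChain (fun z w : ℂ => ‖z‖ = 1 ∧ ‖w‖ = 1 ∧ z ^ m = w ^ n) r a b := by
  obtain ⟨r, rfl⟩ := Nat.exists_eq_add_of_le' hr
  constructor
  · rintro ⟨z, ⟨hnorm, hstep⟩, h0, hl⟩
    exact ⟨z, fun k => ⟨hnorm _, hnorm _, hstep k⟩, h0, hl⟩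
  · rintro ⟨z, hstep, h0, hl⟩
    refine ⟨z, ⟨fun k => ?_, fun k => (hstep k).2.2⟩, h0, hl⟩
    induction k using Fin.lastCases with
    | last => exact (hstep (Fin.last r)).2.1
    | cast k => exact (hstep k).1

theorem Nat.gcd_mul_gcd_pow_pow_succ (m n s : ℕ) :
    Nat.gcd (m * Nat.gcd m n ^ s) (n ^ (s + 1)) = Nat.gcd m n ^ (s + 1) := by
  obtain ⟨m', n', hcop, hm, hn⟩ := Nat.exists_coprime m n
  set d := Nat.gcd m n
  rw [hm, hn, mul_pow, show m' * d * d ^ s = d ^ (s + 1) * m' by ring, mul_comm _ (d ^ (s + 1)),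
    Nat.gcd_mul_left, (hcop.pow_right _).gcd_eq_one, mul_one]

theorem Int.exists_eq_mul_add_pow_mul {m n s : ℕ} {C : ℤ}
    (hC : (Nat.gcd m n : ℤ) ^ (s + 1) ∣ C) :
    ∃ c' c : ℤ, (Nat.gcd m n : ℤ) ^ s ∣ c' ∧ C = m * c' + n ^ (s + 1) * c := by
  obtain ⟨t, rfl⟩ := hC
  obtain ⟨A, B, hAB⟩ : ∃ A B : ℤ,
      (Nat.gcd m n : ℤ) ^ (s + 1) = m * (Nat.gcd m n : ℤ) ^ s * A + n ^ (s + 1) * B := by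
    have h := Int.gcd_eq_gcd_ab ((m * Nat.gcd m n ^ s : ℕ) : ℤ) ((n ^ (s + 1) : ℕ) : ℤ)
    rw [Int.gcd_natCast_natCast, Nat.gcd_mul_gcd_pow_pow_succ] at h
    exact ⟨_, _, by exact_mod_cast h⟩
  exact ⟨(Nat.gcd m n : ℤ) ^ s * A * t, B * t, (dvd_mul_right _ _).mul_right t,
    by rw [hAB]; ring⟩

namespace PowCorrespondence

noncomputable def e (t : ℝ) : ℂ := exp (2 * π * I * t)

theorem norm_e (t : ℝ) : ‖e t‖ = 1 := by
  rw [e, show 2 * π * I * t = ((2 * π * t : ℝ) : ℂ) * I by push_cast; ring,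
    norm_exp_ofReal_mul_I]

theorem e_pow (t : ℝ) (k : ℕ) : e t ^ k = e (k * t) := by
  rw [e, e, ← Complex.exp_nat_mul]
  push_cast
  ring_nf

theorem e_eq_e_iff {s t : ℝ} : e s = e t ↔ ∃ j : ℤ, s = t + j := by
  have h2πI : 2 * π * I ≠ 0 := by simp [pi_ne_zero, I_ne_zero]
  rw [e, e, exp_eq_exp_iff_exists_int]
  refine exists_congr fun j => ?_
  rw [show 2 * π * I * t + j * (2 * π * I) = 2 * π * I * ((t + j : ℝ) : ℂ) by
    push_cast; ring, mul_right_inj' h2πI, ofReal_inj]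

theorem exists_e_eq {z : ℂ} (hz : ‖z‖ = 1) : ∃ t : ℝ, e t = z := by
  refine ⟨z.arg / (2 * π), ?_⟩
  have hπ : (π : ℂ) ≠ 0 := ofReal_ne_zero.mpr pi_ne_zero
  have h := norm_mul_exp_arg_mul_I z
  rw [hz, ofReal_one, one_mul] at h
  conv_rhs => rw [← h]
  rw [e]
  congr 1
  push_cast
  field_simp

def Step (m n : ℕ) (a b : ℝ) : Prop := ∃ c : ℤ, (n : ℝ) * b = m * a + c

theorem step_iff (m n : ℕ) (a b : ℝ) :
    Step m n a b ↔ ‖e a‖ = 1 ∧ ‖e b‖ = 1 ∧ e a ^ m = e b ^ n := by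
  simp only [norm_e, true_and, e_pow, e_eq_e_iff, Step]
  constructor <;> rintro ⟨c, hc⟩ <;> exact ⟨-c, by push_cast; linarith⟩

theorem relChain_step_succ_iff {m n : ℕ} (hn : n ≠ 0) (s : ℕ) {α β : ℝ} :
    RelChain (Step m n) (s + 1) α β ↔
      ∃ c : ℤ, (Nat.gcd m n : ℤ) ^ s ∣ c ∧
        (n : ℝ) ^ (s + 1) * β = m ^ (s + 1) * α + c := by
  have hdm : (Nat.gcd m n : ℤ) ∣ m := Int.natCast_dvd_natCast.mpr (Nat.gcd_dvd_left m n)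
  have hdn : (Nat.gcd m n : ℤ) ∣ n := Int.natCast_dvd_natCast.mpr (Nat.gcd_dvd_right m n)
  induction s generalizing β with
  | zero => simp [relChain_one_iff, Step]
  | succ s ih =>
    simp only [relChain_succ_iff (r := s + 1), ih]
    constructor
    · rintro ⟨γ, ⟨c', hc', hγ⟩, c, hβ⟩
      refine ⟨m * c' + n ^ (s + 1) * c, dvd_add ?_ ?_, ?_⟩
      · exact pow_succ' (Nat.gcd m n : ℤ) s ▸ mul_dvd_mul hdm hc'
      · exact (pow_dvd_pow_of_dvd hdn _).mul_right c
      · push_cast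
        linear_combination (n : ℝ) ^ (s + 1) * hβ + (m : ℝ) * hγ
    · rintro ⟨C, hC, hβ⟩
      obtain ⟨c', c, hc', rfl⟩ := Int.exists_eq_mul_add_pow_mul hC
      have hns : (n : ℝ) ^ (s + 1) ≠ 0 := by positivity
      refine ⟨(m ^ (s + 1) * α + c') / n ^ (s + 1), ⟨c', hc', by field_simp⟩, c, ?_⟩
      apply mul_left_cancel₀ hns
      push_cast at hβ
      field_simp
      linear_combination hβ

end PowCorrespondence

open PowCorrespondence in
theorem stmt_5_general (m n r : ℕ) (hn : 1 ≤ n) (hr : 1 ≤ r) (α β : ℝ) :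
    (∃ z : Fin (r + 1) → ℂ, IsChainT m n r z ∧
        z 0 = Complex.exp (2 * Real.pi * Complex.I * (α : ℂ)) ∧
        z (Fin.last r) = Complex.exp (2 * Real.pi * Complex.I * (β : ℂ))) ↔
      ∃ k j : ℤ, β = ((m : ℝ) ^ r / (n : ℝ) ^ r) * α +
        ((Nat.gcd m n : ℝ)) ^ (r - 1) * (k : ℝ) / (n : ℝ) ^ r + (j : ℝ) := by
  obtain ⟨s, rfl⟩ := Nat.exists_eq_add_of_le' hr
  have hns : (n : ℝ) ^ (s + 1) ≠ 0 := by positivity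
  change (∃ z, IsChainT m n (s + 1) z ∧ z 0 = e α ∧ z (Fin.last _) = e β) ↔ _
  rw [exists_isChainT_iff_relChain hr,
    ← relChain_comap_iff (fun _ _ h => exists_e_eq h.1) (step_iff m n) hr,
    relChain_step_succ_iff (by omega), Nat.add_sub_cancel]
  constructor
  · rintro ⟨_, ⟨k, rfl⟩, hβ⟩
    refine ⟨k, 0, ?_⟩
    field_simp
    push_cast at hβ
    linear_combination hβ
  · rintro ⟨k, j, rfl⟩
    have hdn : (Nat.gcd m n : ℤ) ^ s ∣ (n : ℤ) ^ (s + 1) :=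
      (pow_dvd_pow_of_dvd (Int.natCast_dvd_natCast.mpr (Nat.gcd_dvd_right m n)) s).trans
        (pow_dvd_pow _ s.le_succ)
    refine ⟨Nat.gcd m n ^ s * k + n ^ (s + 1) * j,
      dvd_add (dvd_mul_right _ _) (hdn.mul_right j), ?_⟩
    push_cast
    field_simp
    ring

/-- for `p(z,w) = z^m - w^n` on `𝕋 ≅ ℝ/ℤ` and `d = gcd(m,n)`,
`([α],[β]) ∈ G_r` (there is a length-`r` chain from `e^{2πiα}` to `e^{2πiβ}`)
iff `β ≡ (m^r/n^r) α + d^{r-1} k / n^r (mod ℤ)` for some integer `k`. -/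
theorem stmt_5 (m n r : ℕ) (hm : 1 ≤ m) (hn : 1 ≤ n) (hr : 1 ≤ r) (α β : ℝ) :
    (∃ z : Fin (r + 1) → ℂ, IsChainT m n r z ∧
        z 0 = Complex.exp (2 * Real.pi * Complex.I * (α : ℂ)) ∧
        z (Fin.last r) = Complex.exp (2 * Real.pi * Complex.I * (β : ℂ))) ↔
      ∃ k j : ℤ, β = ((m : ℝ) ^ r / (n : ℝ) ^ r) * α +
        ((Nat.gcd m n : ℝ)) ^ (r - 1) * (k : ℝ) / (n : ℝ) ^ r + (j : ℝ) :=
  stmt_5_general m n r hn hr α β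
end

section
/- Suppose m and n are natural numbers with d = gcd(m,n) and m = m₀d with m₀ ≥ 2. For the correspondence z^m = w^n on 𝕋 ≅ ℝ/ℤ, and any open interval I ⊂ ℝ/ℤ of length greater than 1/m₀^r, the set I^{(r)} of endpoints of length-r paths starting in I equals all of ℝ/ℤ. -/
/-- let `d = gcd(m,n)`, `m = m₀ d` with `m₀ ≥ 2`.  For the
correspondence `z^m = w^n` on `𝕋 ≅ ℝ/ℤ` (where a length-`r` path from `[α]` to
`[β]` exists iff `β ≡ (m/n)^r α + d^{r-1} k / n^r (mod ℤ)` for some `k ∈ ℤ`),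
every open interval `I` of length `> 1/m₀^r` satisfies `I^{(r)} = ℝ/ℤ`:
every `[β]` is the endpoint of a length-`r` path starting in `I`. -/
theorem stmt_16 (m n d m₀ r : ℕ) (hn : 1 ≤ n) (hd : d = Nat.gcd m n)
    (hm : m = m₀ * d) (hm₀ : 2 ≤ m₀) (hr : 1 ≤ r)
    (a L : ℝ) (hL : 1 / (m₀ : ℝ) ^ r < L) (β : ℝ) :
    ∃ α ∈ Set.Ioo a (a + L), ∃ k j : ℤ,
      β = ((m : ℝ) / (n : ℝ)) ^ r * α + (d : ℝ) ^ (r - 1) * (k : ℝ) / (n : ℝ) ^ r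
        + (j : ℝ) := by
  have hdpos : 0 < d := hd ▸ Nat.gcd_pos_of_pos_right m hn
  have hmpos : 0 < m := by
    rw [hm]; exact Nat.mul_pos (by omega) hdpos
  have hnR : (0:ℝ) < (n:ℝ) := by exact_mod_cast hn
  have hmR : (0:ℝ) < (m:ℝ) := by exact_mod_cast hmpos
  have hdR : (1:ℝ) ≤ (d:ℝ) := by exact_mod_cast hdpos
  have hm₀R : (0:ℝ) < (m₀:ℝ) := by positivity
  have hmr : (0:ℝ) < (m:ℝ) ^ r := by positivity
  have hnr : (0:ℝ) < (n:ℝ) ^ r := by positivity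
  set D : ℝ := (d:ℝ) ^ (r - 1) with hD
  have hDpos : 0 < D := by positivity
  set s : ℝ := D / (m:ℝ) ^ r with hs
  have hspos : 0 < s := by positivity
  -- s = 1 / (m₀^r * d) ≤ 1/m₀^r
  have hdr : (d:ℝ) ^ r = D * d := by
    rw [hD, ← pow_succ, Nat.sub_add_cancel hr]
  have hmr' : (m:ℝ) ^ r = (m₀:ℝ) ^ r * (D * (d:ℝ)) := by
    rw [← hdr, hm]; push_cast; ring
  have hsle : s < L := by
    have : s = 1 / ((m₀:ℝ) ^ r * (d:ℝ)) := by
      rw [hs, hmr']; field_simp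
    rw [this]
    calc 1 / ((m₀:ℝ) ^ r * (d:ℝ)) ≤ 1 / (m₀:ℝ) ^ r := by
          apply div_le_div_of_nonneg_left (by norm_num) (by positivity)
          nlinarith [pow_pos hm₀R r]
      _ < L := hL
  set c : ℝ := (n:ℝ) ^ r * β / (m:ℝ) ^ r with hc
  set k : ℤ := ⌈(c - a) / s⌉ - 1 with hk
  refine ⟨c - s * k, ⟨?_, ?_⟩, k, 0, ?_⟩
  · have h1 : (k:ℝ) < (c - a) / s := by
      push_cast [hk]
      have := Int.le_ceil ((c - a) / s)
      linarith [Int.ceil_lt_add_one ((c - a) / s)]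
    have := (lt_div_iff₀ hspos).mp h1
    linarith
  · have h2 : (c - a) / s - 1 ≤ (k:ℝ) := by
      push_cast [hk]
      linarith [Int.le_ceil ((c - a) / s)]
    have : c - a - s ≤ s * k := by
      have := (div_le_iff₀ hspos).mp (by linarith : (c - a) / s ≤ (k:ℝ) + 1)
      linarith
    linarith
  · push_cast
    rw [hc, hs]
    rw [div_pow]; field_simp
    ring
end
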